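/- arXiv:2512.00924 — 6 statements merged into one kernel-verified Lean document; each statement's English description precedes it below -/
import Mathlib

section
/- The variety of commutative monoids does not have the amalgamation property: there exist commutative monoids A, B, C with A a common submonoid of B and C such that no monoid D admits embeddings of B and C agreeing on A. Concretely, let A = {u, v, w, 0, e} with identity e and all products of non-identity elements equal to 0 except as forced; B = A ∪ {b} with bu = v; C = A ∪ {c} with cv = w; and all other products 0. Any amalgam would force w = 0, a contradiction. -/
/-!
In any monoid `D` into which `B` and `C` embed compatibly over `A`, associativity gives
`w = v c = (b u) c = b (u c) = b 0 = 0`, computed alternately in the images of `B` and `C`;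
so the copy of `C` cannot be embedded injectively.
-/

universe l l'

namespace CommMonoidAP

inductive A : Type l
  | e | u | v | w | zero
  deriving DecidableEq

instance : Fintype A.{l} := ⟨{.e, .u, .v, .w, .zero}, fun x => by cases x <;> simp⟩

inductive B : Type l
  | e | u | v | w | zero | b
  deriving DecidableEq

instance : Fintype B.{l} := ⟨{.e, .u, .v, .w, .zero, .b}, fun x => by cases x <;> simp⟩

inductive C : Type l
  | e | u | v | w | zero | c
  deriving DecidableEq

instance : Fintype C.{l} := ⟨{.e, .u, .v, .w, .zero, .c}, fun x => by cases x <;> simp⟩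

def A.mul : A.{l} → A.{l} → A.{l}
  | .e, x => x
  | x, .e => x
  | _, _ => .zero

def B.mul : B.{l} → B.{l} → B.{l}
  | .e, x => x
  | x, .e => x
  | .b, .u => .v
  | .u, .b => .v
  | _, _ => .zero

def C.mul : C.{l} → C.{l} → C.{l}
  | .e, x => x
  | x, .e => x
  | .c, .v => .w
  | .v, .c => .w
  | _, _ => .zero

instance : CommMonoid A.{l} where
  mul := A.mul
  one := .e
  mul_assoc := by decide
  one_mul := by decide
  mul_one := by decide
  mul_comm := by decide

instance : CommMonoid B.{l} where
  mul := B.mul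
  one := .e
  mul_assoc := by decide
  one_mul := by decide
  mul_one := by decide
  mul_comm := by decide

instance : CommMonoid C.{l} where
  mul := C.mul
  one := .e
  mul_assoc := by decide
  one_mul := by decide
  mul_one := by decide
  mul_comm := by decide

def A.toB : A.{l} →* B.{l'} where
  toFun
    | .e => .e | .u => .u | .v => .v | .w => .w | .zero => .zero
  map_one' := rfl
  map_mul' := by decide

def A.toC : A.{l} →* C.{l'} where
  toFun
    | .e => .e | .u => .u | .v => .v | .w => .w | .zero => .zero
  map_one' := rfl
  map_mul' := by decide

theorem A.toB_injective : Function.Injective A.toB.{l, l'} := by decide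

theorem A.toC_injective : Function.Injective A.toC.{l, l'} := by decide

theorem map_w_eq_map_zero {D : Type*} [Monoid D] (ψB : B.{l} →* D) (ψC : C.{l'} →* D)
    (hu : ψB .u = ψC .u) (hv : ψB .v = ψC .v) (hzero : ψB .zero = ψC .zero) :
    ψC .w = ψC .zero := by
  calc ψC .w = ψC .v * ψC .c := by rw [← map_mul]; rfl
    _ = ψB .b * ψB .u * ψC .c := by rw [← hv, ← map_mul]; rfl
    _ = ψB .b * (ψC .u * ψC .c) := by rw [hu, mul_assoc]
    _ = ψB .b * ψB .zero := by rw [← map_mul, hzero]; rfl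
    _ = ψC .zero := by rw [← map_mul, ← hzero]; rfl

end CommMonoidAP

open CommMonoidAP in
/-- The variety of commutative monoids does not have the amalgamation property: there are
commutative monoids `A`, `B`, `C` and monoid embeddings `φ_B : A → B`, `φ_C : A → C`
such that no monoid `D` admits embeddings `ψ_B : B → D`, `ψ_C : C → D` with
`ψ_B ∘ φ_B = ψ_C ∘ φ_C`. -/
theorem commutative_monoids_fail_AP :
    ∃ (A B C : CommMonCat) (φB : ↥A →* ↥B) (φC : ↥A →* ↥C),
      Function.Injective φB ∧ Function.Injective φC ∧
      ¬ ∃ (D : MonCat) (ψB : ↥B →* ↥D) (ψC : ↥C →* ↥D),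
          Function.Injective ψB ∧ Function.Injective ψC ∧
          ∀ a : ↥A, ψB (φB a) = ψC (φC a) := by
  refine ⟨.of A, .of B, .of C, A.toB, A.toC, A.toB_injective, A.toC_injective, ?_⟩
  rintro ⟨D, ψB, ψC, -, hψC, hagree⟩
  have hw := map_w_eq_map_zero ψB ψC (hagree .u) (hagree .v) (hagree .zero)
  exact absurd (hψC hw) (by decide)
end

section
/- The variety of bounded distributive lattices does not have the strong amalgamation property: taking A = {⊥, a, ⊤}, B = {⊥, a, b, ⊤}, and C = {⊥, a, c, ⊤} as sublattices of M₅, any amalgam ⟨D, ψ_B, ψ_C⟩ in bounded distributive lattices satisfies ψ_B(b) = ψ_C(c), since both are complements of ψ_B(a) = ψ_C(a) and complements are unique in bounded distributive lattices; hence ψ_B[B] ∩ ψ_C[C] ≠ ψ_B[A]. -/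
/-- The variety of bounded distributive lattices fails the strong amalgamation property,
witnessed inside `M₅`: with `A = {⊥, a₀, ⊤}`, `B = A ∪ {b}`, `C = A ∪ {c}`, where `b`
and `c` are complements of (the images of) `a₀`, any amalgam `⟨D, ψ_B, ψ_C⟩` in bounded
distributive lattices satisfies `ψ_B b = ψ_C c` (complements are unique), and hence
`ψ_B[B] ∩ ψ_C[C] ≠ ψ_B(φ_B[A])`. -/
theorem bounded_distributive_lattices_fail_strong_AP
    {A B C D : Type*}
    [DistribLattice A] [BoundedOrder A] [DistribLattice B] [BoundedOrder B]
    [DistribLattice C] [BoundedOrder C] [DistribLattice D] [BoundedOrder D]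
    (φB : BoundedLatticeHom A B) (φC : BoundedLatticeHom A C)
    (hφB : Function.Injective φB) (hφC : Function.Injective φC)
    (a₀ : A) (b : B) (c : C)
    (hAuniv : ∀ x : A, x = ⊥ ∨ x = a₀ ∨ x = ⊤)
    (hb₁ : φB a₀ ⊓ b = ⊥) (hb₂ : φB a₀ ⊔ b = ⊤)
    (hc₁ : φC a₀ ⊓ c = ⊥) (hc₂ : φC a₀ ⊔ c = ⊤)
    (hbne : b ≠ ⊥ ∧ b ≠ φB a₀ ∧ b ≠ ⊤)
    (ψB : BoundedLatticeHom B D) (ψC : BoundedLatticeHom C D)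
    (hψB : Function.Injective ψB) (hψC : Function.Injective ψC)
    (hcomm : ∀ a : A, ψB (φB a) = ψC (φC a)) :
    ψB b = ψC c ∧
    Set.range ⇑ψB ∩ Set.range ⇑ψC ≠ Set.range (fun a : A => ψB (φB a)) := by
  have key : ψB b = ψC c := by
    have h1 : IsCompl (ψB (φB a₀)) (ψB b) := by
      constructor
      · rw [disjoint_iff, ← map_inf, hb₁, map_bot]
      · rw [codisjoint_iff, ← map_sup, hb₂, map_top]
    have h2 : IsCompl (ψB (φB a₀)) (ψC c) := by
      rw [hcomm a₀]
      constructor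
      · rw [disjoint_iff, ← map_inf, hc₁, map_bot]
      · rw [codisjoint_iff, ← map_sup, hc₂, map_top]
    exact h1.right_unique h2
  refine ⟨key, fun h => ?_⟩
  have hmem : ψB b ∈ Set.range (fun a : A => ψB (φB a)) := by
    rw [← h]
    exact ⟨⟨b, rfl⟩, ⟨c, key.symm⟩⟩
  obtain ⟨a, ha⟩ := hmem
  have hba : b = φB a := hψB ha.symm
  rcases hAuniv a with h0 | h0 | h0 <;> subst h0
  · exact hbne.1 (by simpa using hba)
  · exact hbne.2.1 hba
  · exact hbne.2.2 (by simpa using hba)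
end

section
/- A variety has the one-sided amalgamation property if and only if it has the amalgamation property. For the nontrivial direction: given a doubly injective span ⟨A, B, C, φ_B, φ_C⟩, apply the 1AP to it and to the reversed span ⟨A, C, B, φ_C, φ_B⟩ to get D₁ with homomorphism ψ_B¹ : B → D₁ and embedding ψ_C¹ : C → D₁, and D₂ with homomorphism ψ_C² : C → D₂ and embedding ψ_B² : B → D₂; then the induced maps into D₁ × D₂ are embeddings forming an amalgam. -/
/-- An algebraic signature: a set of operation symbols with arities. -/
structure Sig : Type 1 where
  ops : Type
  ar : ops → ℕ

/-- An algebra for a signature `S`. -/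
structure Alg (S : Sig) : Type 1 where
  carrier : Type
  interp : (f : S.ops) → (Fin (S.ar f) → carrier) → carrier

/-- `φ` is a homomorphism from `A` to `B`. -/
def IsHom {S : Sig} (A B : Alg S) (φ : A.carrier → B.carrier) : Prop :=
  ∀ (f : S.ops) (v : Fin (S.ar f) → A.carrier),
    φ (A.interp f v) = B.interp f (fun i => φ (v i))

/-- `Θ` is a congruence of `A`: an equivalence relation compatible with all operations. -/
def IsCong {S : Sig} (A : Alg S) (Θ : A.carrier → A.carrier → Prop) : Prop :=
  Equivalence Θ ∧
  ∀ (f : S.ops) (v w : Fin (S.ar f) → A.carrier),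
    (∀ i, Θ (v i) (w i)) → Θ (A.interp f v) (A.interp f w)

/-- The direct product of a family of algebras. -/
def prodAlg {S : Sig} (I : Type) (F : I → Alg S) : Alg S :=
  ⟨∀ i, (F i).carrier, fun f v i => (F i).interp f (fun j => v j i)⟩

/-- A class of algebras is a variety if it is closed under homomorphic images,
subalgebras (up to isomorphism, i.e. under embeddings), and direct products. -/
def IsVariety {S : Sig} (K : Alg S → Prop) : Prop :=
  (∀ (A B : Alg S) (φ : A.carrier → B.carrier),
    K A → IsHom A B φ → Function.Surjective φ → K B) ∧
  (∀ (A B : Alg S) (φ : A.carrier → B.carrier),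
    K B → IsHom A B φ → Function.Injective φ → K A) ∧
  (∀ (I : Type) (F : I → Alg S), (∀ i, K (F i)) → K (prodAlg I F))

/-- A class has the amalgamation property if every doubly injective span in it has an
amalgam in it. -/
def HasAP {S : Sig} (K : Alg S → Prop) : Prop :=
  ∀ (A B C : Alg S), K A → K B → K C →
    ∀ (φB : A.carrier → B.carrier) (φC : A.carrier → C.carrier),
      IsHom A B φB → Function.Injective φB →
      IsHom A C φC → Function.Injective φC →
      ∃ D, K D ∧ ∃ (ψB : B.carrier → D.carrier) (ψC : C.carrier → D.carrier),
        IsHom B D ψB ∧ Function.Injective ψB ∧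
        IsHom C D ψC ∧ Function.Injective ψC ∧
        ∀ a, ψB (φB a) = ψC (φC a)

/-- The one-sided amalgamation property: `ψ_B` need only be a homomorphism, while `ψ_C`
is an embedding. -/
def Has1AP {S : Sig} (K : Alg S → Prop) : Prop :=
  ∀ (A B C : Alg S), K A → K B → K C →
    ∀ (φB : A.carrier → B.carrier) (φC : A.carrier → C.carrier),
      IsHom A B φB → Function.Injective φB →
      IsHom A C φC → Function.Injective φC →
      ∃ D, K D ∧ ∃ (ψB : B.carrier → D.carrier) (ψC : C.carrier → D.carrier),
        IsHom B D ψB ∧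
        IsHom C D ψC ∧ Function.Injective ψC ∧
        ∀ a, ψB (φB a) = ψC (φC a)

/-- A variety has the one-sided amalgamation property iff it has the amalgamation
property. -/
theorem oneAP_iff_AP {S : Sig} (K : Alg S → Prop) (hK : IsVariety K) :
    Has1AP K ↔ HasAP K := by
  constructor
  · intro h1 A B C hA hB hC φB φC hφB hφBi hφC hφCi
    obtain ⟨D₁, hD₁, ψB₁, ψC₁, hψB₁, hψC₁, hψC₁i, hcomm₁⟩ :=
      h1 A B C hA hB hC φB φC hφB hφBi hφC hφCi
    obtain ⟨D₂, hD₂, ψC₂, ψB₂, hψC₂, hψB₂, hψB₂i, hcomm₂⟩ :=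
      h1 A C B hA hC hB φC φB hφC hφCi hφB hφBi
    set F : Bool → Alg S := fun b => Bool.rec D₂ D₁ b with hF
    refine ⟨prodAlg Bool F, hK.2.2 Bool F (fun b => by cases b <;> assumption),
      fun x => fun b => Bool.rec (ψB₂ x) (ψB₁ x) b,
      fun x => fun b => Bool.rec (ψC₂ x) (ψC₁ x) b, ?_, ?_, ?_, ?_, ?_⟩
    · intro f v
      funext b
      cases b
      · exact hψB₂ f v
      · exact hψB₁ f v
    · intro x y hxy
      exact hψB₂i (congrFun hxy false)
    · intro f v
      funext b
      cases b
      · exact hψC₂ f v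
      · exact hψC₁ f v
    · intro x y hxy
      exact hψC₁i (congrFun hxy true)
    · intro a
      funext b
      cases b
      · exact (hcomm₂ a).symm
      · exact hcomm₁ a
  · intro h A B C hA hB hC φB φC hφB hφBi hφC hφCi
    obtain ⟨D, hD, ψB, ψC, h1, h2, h3, h4, h5⟩ :=
      h A B C hA hB hC φB φC hφB hφBi hφC hφCi
    exact ⟨D, hD, ψB, ψC, h1, h3, h4, h5⟩
end

section
/- A variety V has the congruence extension property if and only if for every injective-surjective span ⟨A, B, C, φ_B, φ_C⟩ in V (φ_B an embedding, φ_C surjective), there exist D ∈ V, a homomorphism ψ_B : B → D, and an embedding ψ_C : C → D with ψ_B ∘ φ_B = ψ_C ∘ φ_C. -/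
/-- A subset of an algebra's carrier is closed under its operations. -/
def ClosedUnderOps {S : Sig} (B : Alg S) (A : Set B.carrier) : Prop :=
  ∀ (f : S.ops) (v : Fin (S.ar f) → B.carrier), (∀ i, v i ∈ A) → B.interp f v ∈ A

/-- The subalgebra of `B` on a closed subset `A`. -/
def subAlg {S : Sig} (B : Alg S) (A : Set B.carrier) (h : ClosedUnderOps B A) : Alg S :=
  ⟨A, fun f v => ⟨B.interp f (fun i => (v i : B.carrier)), h f _ (fun i => (v i).2)⟩⟩

/-- A class of algebras has the congruence extension property if every congruence of a
subalgebra of a member is the restriction of a congruence of that member. -/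
def HasCEP {S : Sig} (K : Alg S → Prop) : Prop :=
  ∀ (B : Alg S), K B → ∀ (A : Set B.carrier) (hA : ClosedUnderOps B A)
    (Θ : ↥A → ↥A → Prop), IsCong (subAlg B A hA) Θ →
    ∃ Φ : B.carrier → B.carrier → Prop, IsCong B Φ ∧
      ∀ x y : ↥A, (Φ (x : B.carrier) (y : B.carrier) ↔ Θ x y)

/-
Both directions go through the homomorphism theorem. Given a span with `φB` an embedding and
`φC` onto, transport the kernel of `φC` to the copy of `A` inside `B`, extend it by CEP to a
congruence `Φ` of `B`, and take `D := B / Φ`; since `Φ` restricts to exactly the kernel of `φC`,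
the map `C ≅ A / ker φC → B / Φ` is an embedding. Conversely, for a congruence `Θ` of a
subalgebra `A ≤ B`, complete the span `B ← A ↠ A / Θ`; the kernel of `ψB` is the required
extension of `Θ`, because `ψC` is injective.
-/

namespace Alg

variable {S : Sig}

theorem _root_.IsHom.comp {A B C : Alg S} {φ : A.carrier → B.carrier} {ψ : B.carrier → C.carrier}
    (hφ : IsHom A B φ) (hψ : IsHom B C ψ) : IsHom A C (ψ ∘ φ) := fun f v => by
  simp only [Function.comp_apply, hφ f v, hψ f]

theorem isCong_ker {A B : Alg S} {φ : A.carrier → B.carrier} (hφ : IsHom A B φ) :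
    IsCong A (fun x y => φ x = φ y) :=
  ⟨⟨fun _ => rfl, Eq.symm, Eq.trans⟩, fun f v w hvw =>
    (hφ f v).trans <| (congrArg _ (funext hvw)).trans (hφ f w).symm⟩

theorem isHom_val (B : Alg S) {A : Set B.carrier} (hA : ClosedUnderOps B A) :
    IsHom (subAlg B A hA) B Subtype.val := fun _ _ => rfl

theorem closedUnderOps_range {A B : Alg S} {φ : A.carrier → B.carrier} (hφ : IsHom A B φ) :
    ClosedUnderOps B (Set.range φ) := fun f v hv => by
  choose a ha using hv
  exact ⟨A.interp f a, by rw [hφ f a]; exact congrArg _ (funext ha)⟩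

theorem isHom_rangeFactorization {A B : Alg S} {φ : A.carrier → B.carrier}
    (hφ : IsHom A B φ) :
    IsHom A (subAlg B (Set.range φ) (closedUnderOps_range hφ)) (Set.rangeFactorization φ) :=
  fun f v => Subtype.ext (hφ f v)

section Quotient

def congSetoid (A : Alg S) {Θ : A.carrier → A.carrier → Prop} (hΘ : IsCong A Θ) :
    Setoid A.carrier :=
  ⟨Θ, hΘ.1⟩

noncomputable def quot (A : Alg S) {Θ : A.carrier → A.carrier → Prop} (hΘ : IsCong A Θ) :
    Alg S :=
  ⟨Quotient (congSetoid A hΘ),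
    fun f v => Quotient.mk _ (A.interp f fun i => (v i).out)⟩

variable (A : Alg S) {Θ : A.carrier → A.carrier → Prop} (hΘ : IsCong A Θ)

theorem isHom_quotMk : IsHom A (quot A hΘ) (Quotient.mk (congSetoid A hΘ)) := fun f v =>
  Quotient.sound <| hΘ.2 f _ _ fun i =>
    hΘ.1.symm (Quotient.exact (Quotient.out_eq (Quotient.mk (congSetoid A hΘ) (v i))))

theorem quotMk_surjective : Function.Surjective (Quotient.mk (congSetoid A hΘ)) :=
  Quotient.mk_surjective

theorem quotMk_eq_iff {x y : A.carrier} :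
    Quotient.mk (congSetoid A hΘ) x = Quotient.mk (congSetoid A hΘ) y ↔ Θ x y :=
  Quotient.eq

end Quotient

section HomomorphismTheorem

variable {A C D : Alg S} {p : A.carrier → C.carrier} (hp : Function.Surjective p)
  {ψ : A.carrier → D.carrier}

theorem isHom_comp_surjInv (hpHom : IsHom A C p) (hψ : IsHom A D ψ)
    (hker : ∀ a a', p a = p a' → ψ a = ψ a') : IsHom C D (ψ ∘ Function.surjInv hp) :=
  fun f v => by
    show ψ _ = D.interp f fun i => ψ (Function.surjInv hp (v i))
    rw [← hψ f]
    apply hker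
    rw [hpHom f, Function.surjInv_eq hp]
    exact congrArg _ (funext fun i => (Function.surjInv_eq hp (v i)).symm)

theorem comp_surjInv_apply (hker : ∀ a a', p a = p a' → ψ a = ψ a') (a : A.carrier) :
    (ψ ∘ Function.surjInv hp) (p a) = ψ a :=
  hker _ _ (Function.surjInv_eq hp (p a))

theorem injective_comp_surjInv (hker : ∀ a a', ψ a = ψ a' → p a = p a') :
    Function.Injective (ψ ∘ Function.surjInv hp) := fun c c' h => by
  simpa only [Function.surjInv_eq] using hker _ _ h

end HomomorphismTheorem

def CompletesInjSurjSpans (K : Alg S → Prop) : Prop :=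
  ∀ (A B C : Alg S), K A → K B → K C →
    ∀ (φB : A.carrier → B.carrier) (φC : A.carrier → C.carrier),
      IsHom A B φB → Function.Injective φB →
      IsHom A C φC → Function.Surjective φC →
      ∃ D, K D ∧ ∃ (ψB : B.carrier → D.carrier) (ψC : C.carrier → D.carrier),
        IsHom B D ψB ∧ IsHom C D ψC ∧ Function.Injective ψC ∧
        ∀ a, ψB (φB a) = ψC (φC a)

variable {K : Alg S → Prop}

theorem completesInjSurjSpans_of_hasCEP
    (hH : ∀ (A B : Alg S) (φ : A.carrier → B.carrier),
      K A → IsHom A B φ → Function.Surjective φ → K B)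
    (hCEP : HasCEP K) : CompletesInjSurjSpans K := by
  intro A B C _ hKB _ φB φC hφB hφB_inj hφC hφC_surj
  let p : A.carrier → (subAlg B (Set.range φB) (closedUnderOps_range hφB)).carrier :=
    Set.rangeFactorization φB
  have hp : Function.Surjective p := Set.rangeFactorization_surjective
  have hp_ker : ∀ a a', p a = p a' → φC a = φC a' := fun a a' h =>
    congrArg φC (hφB_inj (congrArg Subtype.val h))
  -- the kernel of `φC`, transported to the copy of `A` inside `B`
  have hθ := isCong_ker (isHom_comp_surjInv hp (isHom_rangeFactorization hφB) hφC hp_ker)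
  obtain ⟨Φ, hΦ, hΦ_restrict⟩ := hCEP B hKB _ _ _ hθ
  let q : A.carrier → (quot B hΦ).carrier := Quotient.mk _ ∘ φB
  have hq_ker : ∀ a a', q a = q a' ↔ φC a = φC a' := fun a a' => by
    rw [← comp_surjInv_apply hp hp_ker a, ← comp_surjInv_apply hp hp_ker a']
    exact (quotMk_eq_iff B hΦ).trans (hΦ_restrict (p a) (p a'))
  refine ⟨quot B hΦ, hH B _ _ hKB (isHom_quotMk B hΦ) (quotMk_surjective B hΦ),
    Quotient.mk _, q ∘ Function.surjInv hφC_surj, isHom_quotMk B hΦ,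
    isHom_comp_surjInv hφC_surj hφC (hφB.comp (isHom_quotMk B hΦ)) fun a a' => (hq_ker a a').2,
    injective_comp_surjInv hφC_surj fun a a' => (hq_ker a a').1,
    fun a => (comp_surjInv_apply hφC_surj (fun a a' => (hq_ker a a').2) a).symm⟩

theorem hasCEP_of_completesInjSurjSpans
    (hH : ∀ (A B : Alg S) (φ : A.carrier → B.carrier),
      K A → IsHom A B φ → Function.Surjective φ → K B)
    (hS : ∀ (A B : Alg S) (φ : A.carrier → B.carrier),
      K B → IsHom A B φ → Function.Injective φ → K A)
    (hspans : CompletesInjSurjSpans K) : HasCEP K := by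
  intro B hKB A hA Θ hΘ
  have hKA := hS _ B _ hKB (isHom_val B hA) Subtype.val_injective
  have hKC := hH _ _ _ hKA (isHom_quotMk _ hΘ) (quotMk_surjective _ hΘ)
  obtain ⟨D, -, ψB, ψC, hψB, -, hψC_inj, hcomm⟩ :=
    hspans _ B _ hKA hKB hKC _ _ (isHom_val B hA) Subtype.val_injective
      (isHom_quotMk _ hΘ) (quotMk_surjective _ hΘ)
  refine ⟨fun x y => ψB x = ψB y, isCong_ker hψB, fun x y => ?_⟩
  show ψB x = ψB y ↔ Θ x y
  rw [hcomm x, hcomm y]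
  exact hψC_inj.eq_iff.trans (quotMk_eq_iff _ hΘ)

end Alg

/-- A variety `V` has the congruence extension property iff for every injective-surjective
span `⟨A, B, C, φ_B, φ_C⟩` in `V` (`φ_B` an embedding, `φ_C` surjective), there are
`D ∈ V`, a homomorphism `ψ_B : B → D` and an embedding `ψ_C : C → D` with
`ψ_B ∘ φ_B = ψ_C ∘ φ_C`. -/
theorem CEP_iff_injective_surjective_spans {S : Sig} (K : Alg S → Prop)
    (hK : IsVariety K) :
    HasCEP K ↔
      ∀ (A B C : Alg S), K A → K B → K C →
        ∀ (φB : A.carrier → B.carrier) (φC : A.carrier → C.carrier),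
          IsHom A B φB → Function.Injective φB →
          IsHom A C φC → Function.Surjective φC →
          ∃ D, K D ∧ ∃ (ψB : B.carrier → D.carrier) (ψC : C.carrier → D.carrier),
            IsHom B D ψB ∧ IsHom C D ψC ∧ Function.Injective ψC ∧
            ∀ a, ψB (φB a) = ψC (φC a) :=
  ⟨Alg.completesInjSurjSpans_of_hasCEP hK.1,
    Alg.hasCEP_of_completesInjSurjSpans hK.1 hK.2.1⟩
end

section
/- Correspondence identity for generated congruences: for any algebras B, C of the same signature, surjective homomorphism π : C → B, and R ⊆ C × C, the preimage under π of the congruence of B generated by π[R] equals the join, in the congruence lattice of C, of the congruence generated by R with ker(π): π⁻¹[cg_B(π[R])] = cg_C(R) ∨ ker(π). -/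
/-- The congruence of `B` generated by a relation `R`: the intersection of all
congruences of `B` containing `R`. -/
def cgRel {S : Sig} (B : Alg S) (R : B.carrier → B.carrier → Prop) :
    B.carrier → B.carrier → Prop :=
  fun x y => ∀ Φ : B.carrier → B.carrier → Prop,
    IsCong B Φ → (∀ a b, R a b → Φ a b) → Φ x y

lemma cgRel_isCong {S : Sig} (B : Alg S) (R : B.carrier → B.carrier → Prop) :
    IsCong B (cgRel B R) := by
  constructor
  · constructor
    · intro x Φ hΦ _; exact hΦ.1.refl x
    · intro x y h Φ hΦ hR; exact hΦ.1.symm (h Φ hΦ hR)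
    · intro x y z h1 h2 Φ hΦ hR; exact hΦ.1.trans (h1 Φ hΦ hR) (h2 Φ hΦ hR)
  · intro f v w h Φ hΦ hR
    exact hΦ.2 f v w (fun i => h i Φ hΦ hR)

lemma cgRel_le {S : Sig} (B : Alg S) (R : B.carrier → B.carrier → Prop) :
    ∀ a b, R a b → cgRel B R a b := fun _ _ h Φ _ hR => hR _ _ h

/-- Correspondence identity: for a surjective homomorphism `π : C → B` and
`R ⊆ C × C`, we have `π⁻¹[cg_B(π[R])] = cg_C(R) ∨ ker(π)`, where the join of
`cg_C(R)` and `ker(π)` is the congruence generated by their union. -/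
theorem correspondence_identity {S : Sig} (B C : Alg S)
    (π : C.carrier → B.carrier) (hπ : IsHom C B π) (hs : Function.Surjective π)
    (R : C.carrier → C.carrier → Prop) :
    ∀ x y : C.carrier,
      cgRel B (fun u v => ∃ a b : C.carrier, R a b ∧ π a = u ∧ π b = v) (π x) (π y) ↔
      cgRel C (fun a b => R a b ∨ π a = π b) x y := by
  set T : C.carrier → C.carrier → Prop := fun a b => R a b ∨ π a = π b with hT
  have hTcong := cgRel_isCong C T
  -- The pushed-down relation on B
  set Φ : B.carrier → B.carrier → Prop :=
    fun u v => ∃ x y : C.carrier, π x = u ∧ π y = v ∧ cgRel C T x y with hΦdef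
  have hker : ∀ a b : C.carrier, π a = π b → cgRel C T a b :=
    fun a b h => cgRel_le C T a b (Or.inr h)
  have hΦcong : IsCong B Φ := by
    constructor
    · constructor
      · intro u
        obtain ⟨x, hx⟩ := hs u
        exact ⟨x, x, hx, hx, hTcong.1.refl x⟩
      · rintro u v ⟨x, y, hx, hy, h⟩
        exact ⟨y, x, hy, hx, hTcong.1.symm h⟩
      · rintro u v w ⟨x, y, hx, hy, h1⟩ ⟨y', z, hy', hz, h2⟩
        exact ⟨x, z, hx, hz, hTcong.1.trans h1
          (hTcong.1.trans (hker y y' (hy.trans hy'.symm)) h2)⟩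
    · intro f v w h
      choose x y hx hy hxy using h
      refine ⟨C.interp f x, C.interp f y, ?_, ?_, hTcong.2 f x y hxy⟩
      · rw [hπ f x]; exact congrArg _ (funext hx)
      · rw [hπ f y]; exact congrArg _ (funext hy)
  intro x y
  constructor
  · intro h
    have := h Φ hΦcong (by
      rintro u v ⟨a, b, hab, ha, hb⟩
      exact ⟨a, b, ha, hb, cgRel_le C T a b (Or.inl hab)⟩)
    obtain ⟨x', y', hx', hy', hxy⟩ := this
    exact hTcong.1.trans (hker x x' hx'.symm)
      (hTcong.1.trans hxy (hker y' y hy'))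
  · intro h
    set SB : B.carrier → B.carrier → Prop :=
      fun u v => ∃ a b : C.carrier, R a b ∧ π a = u ∧ π b = v with hSB
    have hBcong := cgRel_isCong B SB
    refine h (fun a b => cgRel B SB (π a) (π b)) ?_ ?_
    · constructor
      · exact ⟨fun a => hBcong.1.refl _, fun h => hBcong.1.symm h,
          fun h1 h2 => hBcong.1.trans h1 h2⟩
      · intro f v w hvw
        rw [hπ f v, hπ f w]
        exact hBcong.2 f _ _ hvw
    · intro a b hab
      rcases hab with hab | hab
      · exact cgRel_le B SB _ _ ⟨a, b, hab, rfl, rfl⟩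
      · rw [hab]; exact hBcong.1.refl _
end

section
/- If V is a variety of Heyting algebras generated by a finite totally ordered Heyting algebra with n elements where n > 3, then V does not have the amalgamation property: the totally ordered algebras B = {⊥ < b < a₁ < ⋯ < a_{n-3} < ⊤} and C = {⊥ < a₁ < ⋯ < a_{n-3} < c < ⊤}, with common subalgebra A = {⊥ < a₁ < ⋯ < a_{n-3} < ⊤}, have no amalgam in V, since an amalgam would contain an (n+1)-element totally ordered Heyting subalgebra, contradicting the fact that V satisfies ⊤ ≈ x₁ ∨ (x₁ → x₂) ∨ (x₂ → x₃) ∨ ⋯ ∨ (x_{n-1} → x_n). -/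
/-- Heyting formulas over countably many variables. -/
inductive HTerm : Type
  | var : ℕ → HTerm
  | bot : HTerm
  | top : HTerm
  | meet : HTerm → HTerm → HTerm
  | join : HTerm → HTerm → HTerm
  | himp : HTerm → HTerm → HTerm

/-- Evaluation of a Heyting formula in a Heyting algebra under a valuation. -/
def heval {H : Type*} [HeytingAlgebra H] (v : ℕ → H) : HTerm → H
  | .var n => v n
  | .bot => ⊥
  | .top => ⊤
  | .meet s t => heval v s ⊓ heval v t
  | .join s t => heval v s ⊔ heval v t
  | .himp s t => heval v s ⇨ heval v t

/-- Membership in the variety generated by the Heyting algebra `H`: a Heyting algebra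
belongs to it iff it satisfies every equation satisfied by `H`. -/
def InVarietyOf (H : Type) [HeytingAlgebra H] (K : HeytAlg) : Prop :=
  ∀ s t : HTerm, (∀ v : ℕ → H, heval v s = heval v t) → ∀ w : ℕ → ↥K, heval w s = heval w t
/-!
With its variables numbered upwards, the chain identity reads
`⊤ ≈ x_k ∨ (x_k ⇨ x_{k-1}) ∨ ⋯ ∨ (x₁ ⇨ x₀)`. A valuation in a totally ordered Heyting algebra
falsifies it only if `x₀ < x₁ < ⋯ < x_k < ⊤`, so it holds in every chain with at most `k + 1`
elements, in particular in `H` for `k = n - 1`.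

Embed the `(n - 1)`-chain into two copies of the `n`-chain, skipping the element `1` in `B` and
the element `n - 2` in `C`. In an amalgam `D` the elements
`ψB 0 < ψB 1 < ⋯ < ψB (n - 2) = ψC (n - 3) < ψC (n - 2) < ⊤` form an `(n + 1)`-chain, and each
implication between neighbours is computed inside `B` or inside `C`, where it is the smaller
neighbour. So the chain identity with `k = n - 1` evaluates to `ψC (n - 2) ≠ ⊤` in `D`.
-/

open Function

universe u v w

namespace ULift

variable {α : Type u}

instance instHImp [HImp α] : HImp (ULift.{v} α) where himp x y := up (x.down ⇨ y.down)

instance instHeytingAlgebra [HeytingAlgebra α] : HeytingAlgebra (ULift.{v} α) :=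
  down_injective.heytingAlgebra _ .rfl .rfl (fun _ _ => rfl) (fun _ _ => rfl) rfl rfl
    (fun _ => rfl) (fun _ _ => rfl)

end ULift

theorem nonempty_fin_orderIso {α : Type*} [Lattice α] [Std.Total (α := α) (· ≤ ·)] [Fintype α]
    {n : ℕ} (h : Fintype.card α = n) : Nonempty (Fin n ≃o α) := by
  classical
  let := Lattice.toLinearOrder α
  exact ⟨Fintype.orderIsoFinOfCardEq α h⟩

section Total

variable {α β : Type*} [HeytingAlgebra α] [HeytingAlgebra β] [Std.Total (α := α) (· ≤ ·)]

theorem himp_eq_of_not_le {a b : α} (h : ¬ a ≤ b) : a ⇨ b = b := by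
  refine le_antisymm ?_ (le_himp_iff.2 inf_le_left)
  rcases total_of (· ≤ ·) a (a ⇨ b) with ha | ha
  · exact absurd (le_himp_iff.1 ha) (by rwa [inf_idem])
  · simpa [inf_eq_left.2 ha] using himp_inf_le (a := a) (b := b)

variable [Std.Total (α := β) (· ≤ ·)]

def OrderEmbedding.toHeytingHom (f : α ↪o β) (map_bot : f ⊥ = ⊥) (map_top : f ⊤ = ⊤) :
    HeytingHom α β where
  toFun := f
  map_sup' a b := by
    rcases total_of (· ≤ ·) a b with h | h <;> simp [h, f.monotone h]
  map_inf' a b := by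
    rcases total_of (· ≤ ·) a b with h | h <;> simp [h, f.monotone h]
  map_bot' := map_bot
  map_himp' a b := by
    by_cases h : a ≤ b
    · rw [himp_eq_top_iff.2 h, himp_eq_top_iff.2 (f.monotone h)]
      exact map_top
    · rw [himp_eq_of_not_le h, himp_eq_of_not_le (f.le_iff_le.not.2 h)]

end Total

def Fin.succAboveHeytingHom {n : ℕ} (p : Fin (n + 2)) (h₀ : p ≠ 0) (hlast : p ≠ Fin.last _) :
    HeytingHom (Fin (n + 1)) (Fin (n + 2)) :=
  (Fin.succAboveOrderEmb p).toHeytingHom (Fin.succAbove_ne_zero_zero h₀)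
    (by simpa [Fin.top_eq_last] using Fin.succAbove_ne_last_last hlast)

theorem Fin.succAboveHeytingHom_injective {n : ℕ} (p : Fin (n + 2)) (h₀ : p ≠ 0)
    (hlast : p ≠ Fin.last _) : Injective (p.succAboveHeytingHom h₀ hlast) :=
  Fin.succAbove_right_injective

namespace HeytingHom

variable (α : Type u) {β : Type*} [HeytingAlgebra α] [HeytingAlgebra β]

def uliftUp : HeytingHom α (ULift.{v} α) := (ULift.orderIso.symm : α ≃o ULift.{v} α)

def uliftDown : HeytingHom (ULift.{v} α) α := (ULift.orderIso : ULift.{v} α ≃o α)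

variable {α}

def ulift (f : HeytingHom α β) : HeytingHom (ULift.{v} α) (ULift.{w} β) :=
  (uliftUp β).comp (f.comp (uliftDown α))

theorem ulift_injective {f : HeytingHom α β} (hf : Injective f) :
    Injective (f.ulift : ULift.{v} α → ULift.{w} β) :=
  ULift.up_injective.comp (hf.comp ULift.down_injective)

end HeytingHom

theorem heval_map {α β : Type*} [HeytingAlgebra α] [HeytingAlgebra β] (f : HeytingHom α β)
    (v : ℕ → α) : ∀ t : HTerm, f (heval v t) = heval (f ∘ v) t
  | .var _ => rfl
  | .bot => map_bot f
  | .top => map_top f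
  | .meet s t => by simp only [heval, map_inf, heval_map f v s, heval_map f v t]
  | .join s t => by simp only [heval, map_sup, heval_map f v s, heval_map f v t]
  | .himp s t => by simp only [heval, map_himp, heval_map f v s, heval_map f v t]

theorem InVarietyOf.of_injective {H : Type} [HeytingAlgebra H] {K : Type u} [HeytingAlgebra K]
    (f : HeytingHom K H) (hf : Injective f) : InVarietyOf H (HeytAlg.of K) :=
  fun s t hst w => hf <| by rw [heval_map, heval_map, hst]

theorem InVarietyOf.ulift {H : Type} {K : Type*} [HeytingAlgebra H] [HeytingAlgebra K]
    (f : HeytingHom K H) (hf : Injective f) : InVarietyOf H (HeytAlg.of (ULift.{u} K)) :=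
  .of_injective (f.comp (HeytingHom.uliftDown K)) (hf.comp ULift.down_injective)

namespace HTerm

def ladder : ℕ → HTerm
  | 0 => .bot
  | k + 1 => .join (ladder k) (.himp (.var (k + 1)) (.var k))

-- The paper's `x₁ ∨ (x₁ → x₂) ∨ ⋯ ∨ (x_k → x_{k+1})`, with `xᵢ` renamed `var (k + 1 - i)`.
def chainTerm (k : ℕ) : HTerm := .join (.var k) (ladder k)

end HTerm

section Chain

variable {α : Type*} [HeytingAlgebra α]

theorem heval_ladder_le_iff {v : ℕ → α} {k : ℕ} {a : α} :
    heval v (HTerm.ladder k) ≤ a ↔ ∀ i < k, v (i + 1) ⇨ v i ≤ a := by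
  induction k with
  | zero => simp [HTerm.ladder, heval]
  | succ k ih => simp only [HTerm.ladder, heval, sup_le_iff, ih, Nat.forall_lt_succ_right]

theorem heval_chainTerm_of_himp_le {v : ℕ → α} {k : ℕ}
    (h : ∀ i < k, v (i + 1) ⇨ v i ≤ v k) : heval v (HTerm.chainTerm k) = v k :=
  sup_eq_left.2 (heval_ladder_le_iff.2 h)

theorem Fintype.add_one_le_card_of_lt_succ {β : Type*} [Preorder β] [Fintype β] {w : ℕ → β}
    {n : ℕ} (h : ∀ i < n, w i < w (i + 1)) : n + 1 ≤ Fintype.card β := by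
  have hw : StrictMono fun i : Fin (n + 1) => w i :=
    Fin.strictMono_iff_lt_succ.2 fun i => h i i.isLt
  simpa using Fintype.card_le_of_injective _ hw.injective

theorem heval_chainTerm_eq_top [Std.Total (α := α) (· ≤ ·)] [Fintype α] {k : ℕ}
    (hk : Fintype.card α ≤ k + 1) (v : ℕ → α) : heval v (HTerm.chainTerm k) = ⊤ := by
  by_contra hne
  set t := heval v (HTerm.chainTerm k)
  have hvk : v k < ⊤ := (le_sup_left : v k ≤ t).trans_lt (Ne.lt_top hne)
  have hv : ∀ i < k, v i < v (i + 1) := fun i hi => by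
    have hle : v (i + 1) ⇨ v i ≤ t := heval_ladder_le_iff.1 le_sup_right i hi
    have hnle : ¬ v (i + 1) ≤ v i := fun h => hne (top_le_iff.1 (himp_eq_top_iff.2 h ▸ hle))
    exact (total_of (· ≤ ·) (v i) (v (i + 1))).resolve_right hnle |>.lt_of_not_ge hnle
  have := Fintype.add_one_le_card_of_lt_succ (w := update v (k + 1) ⊤) (n := k + 1) fun i hi => by
    rcases Nat.lt_succ_iff_lt_or_eq.1 hi with hi | rfl
    · simpa [update_of_ne, hi.ne, (Nat.lt_succ_of_lt hi).ne] using hv i hi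
    · simpa using hvk
  omega

theorem heval_chainTerm_update {K : Type*} [HeytingAlgebra K] [Std.Total (α := K) (· ≤ ·)]
    (ψ : HeytingHom K α) {x : ℕ → K} {k : ℕ} (hx : StrictMonoOn x (Set.Iic k)) {c : α}
    (hle : ψ (x k) ≤ c) (himp_le : c ⇨ ψ (x k) ≤ c) :
    heval (update (ψ ∘ x) (k + 1) c) (HTerm.chainTerm (k + 1)) = c := by
  refine (heval_chainTerm_of_himp_le fun i hi => ?_).trans (update_self ..)
  rcases Nat.lt_succ_iff_lt_or_eq.1 hi with hi | rfl
  · have hxi : x i < x (i + 1) :=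
      hx (Set.mem_Iic.2 (by omega)) (Set.mem_Iic.2 (by omega)) (Nat.lt_succ_self i)
    rw [update_of_ne (by omega), update_of_ne (by omega), update_self, comp_apply, comp_apply,
      ← map_himp, himp_eq_of_not_le hxi.not_ge]
    have hxk : x i ≤ x k := hx.monotoneOn (Set.mem_Iic.2 hi.le) Set.self_mem_Iic hi.le
    exact (OrderHomClass.mono ψ hxk).trans hle
  · simpa using himp_le

end Chain

open Fin.NatCast in
theorem exists_heval_chainTerm_ne_top {D : Type*} [HeytingAlgebra D] {m : ℕ}
    (ψB ψC : HeytingHom (Fin (m + 4)) D) (hψC : Injective ψC)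
    (hcomm : ∀ a : Fin (m + 3), ψB ((1 : Fin (m + 4)).succAbove a) =
      ψC ((⟨m + 2, by omega⟩ : Fin (m + 4)).succAbove a)) :
    ∃ v : ℕ → D, heval v (HTerm.chainTerm (m + 3)) ≠ ⊤ := by
  have hbridge : ψB ⟨m + 2, by omega⟩ = ψC ⟨m + 1, by omega⟩ := by
    simpa [Fin.succAbove, Fin.lt_def] using hcomm ⟨m + 1, by omega⟩
  set c := ψC ⟨m + 2, by omega⟩
  have hlt : (⟨m + 1, by omega⟩ : Fin (m + 4)) < ⟨m + 2, by omega⟩ := Fin.mk_lt_mk.2 (by omega)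
  have hx : StrictMonoOn (fun i : ℕ => (i : Fin (m + 4))) (Set.Iic (m + 2)) := fun a ha b hb hab =>
    (Fin.natCast_lt_natCast (Nat.le_succ_of_le ha) (Nat.le_succ_of_le hb)).2 hab
  have hxk : ((m + 2 : ℕ) : Fin (m + 4)) = ⟨m + 2, by omega⟩ := Fin.natCast_eq_mk _
  have hle : ψB ((m + 2 : ℕ) : Fin (m + 4)) ≤ c := by
    rw [hxk, hbridge]
    exact OrderHomClass.mono ψC hlt.le
  have himp_le : c ⇨ ψB ((m + 2 : ℕ) : Fin (m + 4)) ≤ c := by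
    rw [hxk, hbridge, ← map_himp, himp_eq_of_not_le hlt.not_ge]
    exact OrderHomClass.mono ψC hlt.le
  have hc : c ≠ ⊤ := by
    rw [← map_top ψC]
    exact hψC.ne (by simp [Fin.ext_iff, Fin.top_eq_last])
  exact ⟨_, (heval_chainTerm_update ψB hx hle himp_le).trans_ne hc⟩

/-- If `V` is the variety of Heyting algebras generated by a finite totally ordered
Heyting algebra with `n > 3` elements, then `V` does not have the amalgamation
property. -/
theorem chain_generated_heyting_variety_fails_AP
    (H : Type) [HeytingAlgebra H] [Fintype H]
    (hlin : ∀ a b : H, a ≤ b ∨ b ≤ a) (hcard : 3 < Fintype.card H) :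
    ¬ (∀ (A B C : HeytAlg),
        InVarietyOf H A → InVarietyOf H B → InVarietyOf H C →
        ∀ (φB : HeytingHom ↥A ↥B) (φC : HeytingHom ↥A ↥C),
          Function.Injective φB → Function.Injective φC →
          ∃ D : HeytAlg, InVarietyOf H D ∧
            ∃ (ψB : HeytingHom ↥B ↥D) (ψC : HeytingHom ↥C ↥D),
              Function.Injective ψB ∧ Function.Injective ψC ∧
              ∀ a : ↥A, ψB (φB a) = ψC (φC a)) := by
  intro hAP
  have : Std.Total (α := H) (· ≤ ·) := ⟨hlin⟩
  obtain ⟨m, hm⟩ : ∃ m, Fintype.card H = m + 4 := ⟨_, (Nat.sub_add_cancel hcard).symm⟩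
  obtain ⟨e⟩ := nonempty_fin_orderIso hm
  let ι : HeytingHom (Fin (m + 4)) H := e
  let φB := Fin.succAboveHeytingHom (n := m + 2) 1 (by simp) (by simp [Fin.ext_iff])
  let φC := Fin.succAboveHeytingHom (n := m + 2) ⟨m + 2, by omega⟩ (by simp [Fin.ext_iff])
    (by simp [Fin.ext_iff])
  obtain ⟨D, hD, ψB, ψC, -, hψC, hcomm⟩ :=
    hAP (.of (ULift (Fin (m + 3)))) (.of (ULift (Fin (m + 4)))) (.of (ULift (Fin (m + 4))))
      (.ulift (ι.comp φB) (e.injective.comp (Fin.succAboveHeytingHom_injective ..)))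
      (.ulift ι e.injective) (.ulift ι e.injective) φB.ulift φC.ulift
      (HeytingHom.ulift_injective (Fin.succAboveHeytingHom_injective ..))
      (HeytingHom.ulift_injective (Fin.succAboveHeytingHom_injective ..))
  obtain ⟨v, hv⟩ := exists_heval_chainTerm_ne_top (ψB.comp (.uliftUp _)) (ψC.comp (.uliftUp _))
    (hψC.comp ULift.up_injective) fun a => hcomm (ULift.up a)
  exact hv (hD _ .top (heval_chainTerm_eq_top hm.le) v)
end
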